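/- Let G be a pseudo-planar graph with α(G) = 2 whose independence complex Δ(G) is Eulerian. Then Δ(G) is connected. -/

import Mathlib

open Finset
open Classical

noncomputable section

variable {V : Type*}

/-- An (abstract) simplicial complex on `V`, given as a finite set of finite faces:
nonvoid (contains the empty face) and closed under taking subsets. -/
def IsComplex (Δ : Finset (Finset V)) : Prop :=
  ∅ ∈ Δ ∧ ∀ F ∈ Δ, ∀ H ⊆ F, H ∈ Δ

/-- The reduced Euler characteristic `χ̃(Δ) = Σ_{F ∈ Δ} (-1)^{|F| - 1}`. -/
def chiT (Δ : Finset (Finset V)) : ℤ :=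
  ∑ F ∈ Δ, (-1 : ℤ) ^ (F.card + 1)

/-- The link of a face `F` in `Δ`. -/
def link (Δ : Finset (Finset V)) (F : Finset V) : Finset (Finset V) :=
  Δ.filter (fun H => H ∪ F ∈ Δ ∧ H ∩ F = ∅)

/-- The facets (maximal faces) of `Δ`. -/
def facets (Δ : Finset (Finset V)) : Finset (Finset V) :=
  Δ.filter (fun F => ∀ H ∈ Δ, F ⊆ H → F = H)

/-- `Δ` is pure: all facets have the same cardinality. -/
def PureC (Δ : Finset (Finset V)) : Prop :=
  ∀ F ∈ facets Δ, ∀ H ∈ facets Δ, F.card = H.card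

/-- One more than the dimension of `Δ`: the maximal cardinality of a face. -/
def maxCard (Δ : Finset (Finset V)) : ℕ := Δ.sup Finset.card

/-- The dimension of `Δ` as an integer (`-1` for `Δ = {∅}`). -/
def dimC (Δ : Finset (Finset V)) : ℤ := (maxCard Δ : ℤ) - 1

/-- `Δ` is an Euler complex: pure, and every link has reduced Euler characteristic
`(-1)^{dim}` (note `(-1)^{dim lk} = (-1)^{maxCard lk + 1}`). -/
def Eulerian (Δ : Finset (Finset V)) : Prop :=
  PureC Δ ∧ ∀ F ∈ Δ, chiT (link Δ F) = (-1 : ℤ) ^ (maxCard (link Δ F) + 1)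

/-- `Δ` is semi-Eulerian: the link of each vertex is Eulerian. -/
def SemiEulerian (Δ : Finset (Finset V)) : Prop :=
  ∀ x : V, {x} ∈ Δ → Eulerian (link Δ {x})

/-- The independence complex of a graph `G`: faces are the independent sets. -/
def indepC (G : SimpleGraph V) [Fintype V] : Finset (Finset V) :=
  Finset.univ.filter (fun s => ∀ a ∈ s, ∀ b ∈ s, ¬ G.Adj a b)

/-- The independence number `α(G)`. -/
def indNum (G : SimpleGraph V) [Fintype V] : ℕ := (indepC G).sup Finset.card

/-- `G` is well-covered: every maximal independent set has cardinality `α(G)`. -/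
def WellCovered (G : SimpleGraph V) [Fintype V] : Prop :=
  ∀ s ∈ indepC G, (∀ t ∈ indepC G, s ⊆ t → s = t) → s.card = indNum G

/-- The vertex set of the localization `G_S = G \ (S ∪ N_G(S))`. -/
def locSet (G : SimpleGraph V) (S : Finset V) : Set V :=
  {v | v ∉ S ∧ ∀ u ∈ S, ¬ G.Adj v u}

/-- The localization `G_S`, as an induced subgraph. -/
def locG (G : SimpleGraph V) (S : Finset V) : SimpleGraph (locSet G S) :=
  G.induce (locSet G S)

/-- The deletion `G ∖ v`, as an induced subgraph. -/
def Gdel (G : SimpleGraph V) (v : V) : SimpleGraph {u : V // u ≠ v} :=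
  G.induce {u | u ≠ v}

/-- `G` belongs to the class `W₂`: it is well-covered and for every vertex `v`,
`G ∖ v` is well-covered with `α(G ∖ v) = α(G)`. -/
def InW2 (G : SimpleGraph V) [Fintype V] : Prop :=
  WellCovered G ∧ ∀ v : V, WellCovered (Gdel G v) ∧ indNum (Gdel G v) = indNum G

/-- `δ*(v)`: the number of non-isolated vertices of the induced subgraph `H[N_H(v)]`. -/
def deltaStarV {T : Type*} (H : SimpleGraph T) [Fintype T] (v : T) : ℕ :=
  (Finset.univ.filter (fun u => H.Adj v u ∧ ∃ w, H.Adj v w ∧ H.Adj u w)).card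

/-- `2K₂`: two disjoint edges. -/
def twoK2 : SimpleGraph (Fin 4) := SimpleGraph.fromEdgeSet {s(0, 1), s(2, 3)}

/-- The join `G * H` of two disjoint graphs. -/
def joinG {α β : Type*} (G : SimpleGraph α) (H : SimpleGraph β) : SimpleGraph (α ⊕ β) where
  Adj x y :=
    match x, y with
    | Sum.inl a, Sum.inl b => G.Adj a b
    | Sum.inr a, Sum.inr b => H.Adj a b
    | Sum.inl _, Sum.inr _ => True
    | Sum.inr _, Sum.inl _ => True
  symm := ⟨by
    rintro (a | a) (b | b) h
    · exact h.symm
    · trivial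
    · trivial
    · exact h.symm⟩
  loopless := ⟨by
    rintro (a | a) h
    · exact G.irrefl h
    · exact H.irrefl h⟩

/-- `G` is pseudo-planar: for every independent set `S`, `δ*(G_S) ≤ 5` and
`G_S` is not isomorphic to `2K₂ * 2K₂`. -/
def PseudoPlanar (G : SimpleGraph V) [Fintype V] : Prop :=
  ∀ S ∈ indepC G,
    ((locSet G S).Nonempty → ∃ v : locSet G S, deltaStarV (locG G S) v ≤ 5) ∧
    IsEmpty (locG G S ≃g joinG twoK2 twoK2)

/-- `H` is a minor of `G`: there are disjoint nonempty connected branch sets in `G`,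
one for each vertex of `H`, with edges between branch sets of adjacent vertices. -/
def IsMinor {α β : Type*} (H : SimpleGraph β) (G : SimpleGraph α) : Prop :=
  ∃ B : β → Set α,
    (∀ u, (B u).Nonempty) ∧ (∀ u, (G.induce (B u)).Connected) ∧
    (∀ u w, u ≠ w → Disjoint (B u) (B w)) ∧
    (∀ u w, H.Adj u w → ∃ x ∈ B u, ∃ y ∈ B w, G.Adj x y)

def K5 : SimpleGraph (Fin 5) := ⊤

def K33 : SimpleGraph (Fin 3 ⊕ Fin 3) := completeBipartiteGraph (Fin 3) (Fin 3)

/-- Planarity via Wagner's theorem: no `K₅` minor and no `K_{3,3}` minor. -/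
def Planar (G : SimpleGraph V) : Prop := ¬ IsMinor K5 G ∧ ¬ IsMinor K33 G

/-- The 5-cycle on `Fin 5`. -/
def C5 : SimpleGraph (Fin 5) :=
  SimpleGraph.fromEdgeSet {s(0, 1), s(1, 2), s(2, 3), s(3, 4), s(4, 0)}

/-- A pentagon (5-cycle) with exactly one chord. -/
def pentChord : SimpleGraph (Fin 5) :=
  SimpleGraph.fromEdgeSet {s(0, 1), s(1, 2), s(2, 3), s(3, 4), s(4, 0), s(1, 3)}

/-- The bowtie: two triangles sharing exactly one vertex. -/
def bowtie : SimpleGraph (Fin 5) :=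
  SimpleGraph.fromEdgeSet {s(0, 1), s(1, 2), s(2, 0), s(1, 3), s(3, 4), s(4, 1)}

/-- The possible chords of the 5-cycle `C5`. -/
def chordSet : Finset (Sym2 (Fin 5)) := {s(0, 2), s(0, 3), s(1, 3), s(1, 4), s(2, 4)}

/-- The simplicial boundary map on chains (with coefficients in `k`),
sending `e_F ↦ Σ_{v ∈ F} (-1)^{pos of v in F} e_{F ∖ v}`. -/
def bdry (k : Type*) [Field k] [LinearOrder V] : (Finset V →₀ k) →ₗ[k] (Finset V →₀ k) :=
  Finsupp.lsum k fun F => (LinearMap.id : k →ₗ[k] k).smulRight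
    (∑ v ∈ F, ((-1 : k) ^ (F.filter (fun w => w < v)).card) • Finsupp.single (F.erase v) (1 : k))

/-- The submodule of `c`-chains of `Δ`: spanned by basis elements of faces of cardinality `c`. -/
def chainsSub (k : Type*) [Field k] (Δ : Finset (Finset V)) (c : ℕ) :
    Submodule k (Finset V →₀ k) :=
  Submodule.span k {x | ∃ F ∈ Δ, F.card = c ∧ x = Finsupp.single F (1 : k)}

/-- Vanishing of the reduced simplicial homology `H̃_{c-1}(Δ; k)`:
every cycle supported on faces of cardinality `c` is a boundary. -/
def HVanish (k : Type*) [Field k] [LinearOrder V] (Δ : Finset (Finset V)) (c : ℕ) : Prop :=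
  ∀ ω ∈ chainsSub k Δ c, bdry k ω = 0 → ∃ η ∈ chainsSub k Δ (c + 1), bdry k η = ω

/-- Cohen–Macaulayness of `Δ` over `k`, via Reisner's criterion:
`H̃_i(lk_Δ F; k) = 0` for all faces `F` and all `i < dim lk_Δ F`. -/
def IsCM (k : Type*) [Field k] [LinearOrder V] (Δ : Finset (Finset V)) : Prop :=
  ∀ F ∈ Δ, ∀ c : ℕ, (c : ℤ) - 1 < dimC (link Δ F) → HVanish k (link Δ F) c

/-- The core of `Δ`: the restriction of `Δ` to the vertices `x` with `st_Δ(x) ≠ Δ`. -/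
def coreC (Δ : Finset (Finset V)) : Finset (Finset V) :=
  Δ.filter (fun F => ∀ x ∈ F, ∃ H ∈ Δ, H ∪ {x} ∉ Δ)

/-- Gorensteinness of `Δ` over `k`, via Stanley's criterion:
`core Δ` is a Cohen–Macaulay Euler complex. -/
def IsGor (k : Type*) [Field k] [LinearOrder V] (Δ : Finset (Finset V)) : Prop :=
  IsCM k (coreC Δ) ∧ Eulerian (coreC Δ)

/-- Connectedness of `Δ` (all vertices of `V` being vertices of `Δ`):
its 1-skeleton graph is connected. -/
def ComplexConnected (Δ : Finset (Finset V)) : Prop :=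
  (SimpleGraph.fromRel fun a b => ({a, b} : Finset V) ∈ Δ).Connected

/-- `Δ` is connected in codimension one. -/
def ConnCodimOne (Δ : Finset (Finset V)) : Prop :=
  ∀ F ∈ facets Δ, ∀ H ∈ facets Δ,
    Relation.ReflTransGen
      (fun A B => A ∈ facets Δ ∧ B ∈ facets Δ ∧ (A ∩ B).card = maxCard Δ - 1) F H

/-- The graph obtained from `H` and a vertex `x` by adding new vertices `a, b, c`
(coded `0, 1, 2 : Fin 3`), joining `a` to `b` and to every neighbor of `x`,
`b` to `c`, and `c` to `x`. -/
def extGraph (H : SimpleGraph V) (x : V) : SimpleGraph (V ⊕ Fin 3) :=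
  SimpleGraph.fromRel fun p q =>
    match p, q with
    | Sum.inl u, Sum.inl w => H.Adj u w
    | Sum.inl u, Sum.inr i => (i = 0 ∧ H.Adj u x) ∨ (i = 2 ∧ u = x)
    | Sum.inr i, Sum.inr j => (i = 0 ∧ j = 1) ∨ (i = 1 ∧ j = 2)
    | Sum.inr _, Sum.inl _ => False

end

/-!
The faces of `Δ(G)` are the cliques of `Gᶜ`, so `Δ(G)` is connected iff `Gᶜ` is, and for
`α(G) = 2` the link of a vertex `x` is `{∅}` together with the `Gᶜ`-neighbours of `x`.
Purity rules out isolated vertices of `Gᶜ`, and `χ̃(lk x) = 1` then says that `x` has exactly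
two of them: `Gᶜ` is triangle-free and `2`-regular, so each of its components has at least
four vertices. A vertex of `G` is then non-adjacent to only itself and two others, so once
`|V| ≥ 7` any two vertices have a common neighbour and `δ*(G) = |V| - 3`; pseudo-planarity at
`S = ∅` (where `G_S = G`) gives `|V| ≤ 8`. A disconnected `Gᶜ` therefore consists of two
`4`-cycles, i.e. `G ≅ 2K₂ * 2K₂`, which pseudo-planarity excludes.
-/

open SimpleGraph

lemma mem_facets_of_card_eq_maxCard {V : Type*} {Δ : Finset (Finset V)} {F : Finset V}
    (hF : F ∈ Δ) (hcard : F.card = maxCard Δ) : F ∈ facets Δ :=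
  mem_filter.2 ⟨hF, fun _ hH hFH => eq_of_subset_of_card_le hFH (hcard ▸ le_sup hH)⟩

section IndependenceComplex

variable {V : Type*} [Fintype V] (G : SimpleGraph V)

lemma mem_indepC {s : Finset V} : s ∈ indepC G ↔ ∀ a ∈ s, ∀ b ∈ s, ¬G.Adj a b := by
  simp [indepC]

lemma card_le_indNum {s : Finset V} (hs : s ∈ indepC G) : s.card ≤ indNum G :=
  le_sup hs

lemma empty_mem_indepC : ∅ ∈ indepC G := by
  simp [indepC]

lemma singleton_mem_indepC (x : V) : {x} ∈ indepC G := by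
  simp [indepC]

lemma exists_mem_indepC_card_eq_indNum : ∃ F ∈ indepC G, F.card = indNum G :=
  let ⟨F, hF, hsup⟩ := exists_mem_eq_sup _ ⟨∅, empty_mem_indepC G⟩ card
  ⟨F, hF, hsup.symm⟩

lemma pair_mem_indepC_iff {a b : V} : ({a, b} : Finset V) ∈ indepC G ↔ ¬G.Adj a b := by
  rw [mem_indepC]
  simp [adj_comm]

lemma fromRel_indepC_eq_compl : fromRel (fun a b => ({a, b} : Finset V) ∈ indepC G) = Gᶜ := by
  ext a b
  simp [pair_mem_indepC_iff, adj_comm]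

lemma cliqueFree_three_compl (hα : indNum G ≤ 2) : Gᶜ.CliqueFree 3 := by
  intro s hs
  have hind : s ∈ indepC G := (mem_indepC G).2 fun a ha b hb hab =>
    (compl_adj G a b |>.1 (hs.1 ha hb (G.ne_of_adj hab))).2 hab
  have := (card_le_indNum G hind).trans hα
  rw [hs.2] at this
  omega

lemma link_indepC_singleton (hα : indNum G ≤ 2) (x : V) :
    link (indepC G) {x} =
      insert ∅ ((Gᶜ.neighborFinset x).map ⟨singleton, singleton_injective⟩) := by
  ext H
  simp only [link, mem_filter, mem_insert, mem_map, mem_neighborFinset, compl_adj,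
    Function.Embedding.coeFn_mk]
  constructor
  · rintro ⟨-, hHx, hdisj⟩
    obtain rfl | ⟨y, hy⟩ := H.eq_empty_or_nonempty
    · exact Or.inl rfl
    have hxH : x ∉ H := fun hx => by simp [hx] at hdisj
    have hcard := card_le_indNum G hHx
    rw [card_union_of_disjoint (disjoint_singleton_right.2 hxH), card_singleton] at hcard
    obtain ⟨z, rfl⟩ := card_eq_one.1 (le_antisymm (by omega) (card_pos.2 ⟨y, hy⟩))
    refine Or.inr ⟨z, ⟨fun h => hxH (by simp [h]), ?_⟩, rfl⟩
    exact (mem_indepC G).1 hHx x (by simp) z (by simp)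
  · rintro (rfl | ⟨y, ⟨hxy, hadj⟩, rfl⟩)
    · simpa using ⟨empty_mem_indepC G, singleton_mem_indepC G x⟩
    · refine ⟨singleton_mem_indepC G y, ?_, by simp [Ne.symm hxy]⟩
      rw [← insert_eq, pair_mem_indepC_iff, adj_comm]
      exact hadj

lemma singleton_mem_facets_indepC {x : V} (hx : Gᶜ.neighborFinset x = ∅) :
    {x} ∈ facets (indepC G) := by
  simp only [facets, mem_filter]
  refine ⟨singleton_mem_indepC G x, fun H hH hxH =>
    (subset_singleton_iff'.2 fun y hy => ?_).antisymm' hxH⟩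
  by_contra hyx
  have hadj := (mem_indepC G).1 hH x (hxH (mem_singleton_self x)) y hy
  simpa [hx] using (mem_neighborFinset Gᶜ x y).2 ((compl_adj G x y).2 ⟨Ne.symm hyx, hadj⟩)

lemma compl_degree_eq_two (hα : indNum G = 2) (heu : Eulerian (indepC G)) (x : V) :
    Gᶜ.degree x = 2 := by
  have hlink := link_indepC_singleton G hα.le x
  obtain ⟨y, hy⟩ : (Gᶜ.neighborFinset x).Nonempty := by
    rw [nonempty_iff_ne_empty]
    intro hN
    obtain ⟨F, hF, hF2⟩ := exists_mem_indepC_card_eq_indNum G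
    have := heu.1 _ (singleton_mem_facets_indepC G hN) _ (mem_facets_of_card_eq_maxCard hF hF2)
    rw [card_singleton] at this
    omega
  have hchi : chiT (link (indepC G) {x}) = Gᶜ.degree x - 1 := by
    rw [hlink, chiT, sum_insert (by simp), sum_map, ← card_neighborFinset_eq_degree]
    simp [sub_eq_neg_add]
  have hmax : maxCard (link (indepC G) {x}) = 1 := by
    rw [hlink, maxCard, sup_insert, sup_map]
    simp [Function.comp_def, sup_const ⟨y, hy⟩]
  have := heu.2 {x} (singleton_mem_indepC G x)
  rw [hchi, hmax] at this
  norm_num at this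
  omega

end IndependenceComplex

section DeltaStar

variable {V : Type*} [Fintype V] (G : SimpleGraph V)

lemma exists_common_adj_of_compl_degree_le {d : ℕ} (hdeg : ∀ v, Gᶜ.degree v ≤ d)
    (hcard : 2 * d + 2 < Fintype.card V) (p q : V) : ∃ w, G.Adj p w ∧ G.Adj q w := by
  have hsmall : (insert p (Gᶜ.neighborFinset p) ∪ insert q (Gᶜ.neighborFinset q)).card <
      (univ : Finset V).card := by
    calc _ ≤ (insert p (Gᶜ.neighborFinset p)).card + (insert q (Gᶜ.neighborFinset q)).card :=
          card_union_le _ _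
      _ ≤ (d + 1) + (d + 1) := add_le_add
          ((card_insert_le _ _).trans (Nat.succ_le_succ (hdeg p)))
          ((card_insert_le _ _).trans (Nat.succ_le_succ (hdeg q)))
      _ < _ := by rw [card_univ]; omega
  obtain ⟨w, -, hw⟩ := exists_mem_notMem_of_card_lt_card hsmall
  simp only [mem_union, mem_insert, mem_neighborFinset, compl_adj, not_or, not_and,
    not_not] at hw
  exact ⟨w, hw.1.2 (Ne.symm hw.1.1), hw.2.2 (Ne.symm hw.2.1)⟩

lemma deltaStarV_eq_degree (h : ∀ p q, ∃ w, G.Adj p w ∧ G.Adj q w) (v : V) :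
    deltaStarV G v = G.degree v := by
  rw [deltaStarV, ← card_neighborFinset_eq_degree, neighborFinset_eq_filter]
  simp [h v]

lemma degree_eq_of_compl_degree {d : ℕ} (v : V) (hv : Gᶜ.degree v = d) :
    G.degree v = Fintype.card V - 1 - d := by
  have := G.degree_compl (v := v)
  have := G.degree_lt_card_verts v
  omega

end DeltaStar

section Join

variable {V : Type*} [Fintype V] {G : SimpleGraph V}

lemma twoK2_adj_iff (i j : Fin 4) : twoK2.Adj i j ↔
    (i = 0 ∧ j = 1) ∨ (i = 1 ∧ j = 0) ∨ (i = 2 ∧ j = 3) ∨ (i = 3 ∧ j = 2) := by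
  fin_cases i <;> fin_cases j <;> simp [twoK2, fromEdgeSet_adj]

lemma nonempty_iso_joinG {α β : Type*} [Fintype α] [Fintype β] {A : SimpleGraph α}
    {B : SimpleGraph β} {f : α → V} {g : β → V} (hf : Function.Injective f)
    (hg : Function.Injective g) (hfA : ∀ i j, G.Adj (f i) (f j) ↔ A.Adj i j)
    (hgB : ∀ i j, G.Adj (g i) (g j) ↔ B.Adj i j) (hfg : ∀ i j, G.Adj (f i) (g j))
    (hcard : Fintype.card V ≤ Fintype.card α + Fintype.card β) :
    Nonempty (G ≃g joinG A B) := by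
  have hinj : Function.Injective (Sum.elim f g) := by
    rintro (i | i) (j | j) h
    · exact congrArg _ (hf h)
    · exact (G.ne_of_adj (hfg i j) h).elim
    · exact (G.ne_of_adj (hfg j i) h.symm).elim
    · exact congrArg _ (hg h)
  have hbij : Function.Bijective (Sum.elim f g) :=
    (Fintype.bijective_iff_injective_and_card _).2
      ⟨hinj, le_antisymm (Fintype.card_le_of_injective _ hinj) (by simpa using hcard)⟩
  refine ⟨RelIso.symm ⟨Equiv.ofBijective _ hbij, ?_⟩⟩
  rintro (i | i) (j | j)
  · exact hfA i j
  · exact iff_of_true (hfg i j) trivial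
  · exact iff_of_true (hfg j i).symm trivial
  · exact hgB i j

end Join

section PseudoPlanar

variable {V : Type*} [Fintype V] {G : SimpleGraph V}

lemma deltaStarV_iso {T T' : Type*} [Fintype T] [Fintype T'] {H : SimpleGraph T}
    {H' : SimpleGraph T'} (e : H ≃g H') (v : T) : deltaStarV H' (e v) = deltaStarV H v := by
  refine (card_equiv e.toEquiv fun u => ?_).symm
  simp only [mem_filter, mem_univ, true_and]
  change _ ↔ H'.Adj (e v) (e u) ∧ ∃ w, H'.Adj (e v) w ∧ H'.Adj (e u) w
  simp only [e.surjective.exists, Iso.map_adj_iff]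

def locGEmptyIso (G : SimpleGraph V) : locG G ∅ ≃g G where
  toEquiv := Equiv.subtypeUnivEquiv fun v => ⟨notMem_empty v, by simp⟩
  map_rel_iff' := Iff.rfl

lemma PseudoPlanar.isEmpty_iso_joinG (hpp : PseudoPlanar G) :
    IsEmpty (G ≃g joinG twoK2 twoK2) :=
  ⟨fun e => (hpp ∅ (empty_mem_indepC G)).2.false ((locGEmptyIso G).trans e)⟩

lemma PseudoPlanar.card_le_eight (hpp : PseudoPlanar G) (hreg : Gᶜ.IsRegularOfDegree 2) :
    Fintype.card V ≤ 8 := by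
  by_contra! h
  obtain ⟨x⟩ := Fintype.card_pos_iff.1 (by omega : 0 < Fintype.card V)
  obtain ⟨v, hv⟩ := (hpp ∅ (empty_mem_indepC G)).1 ⟨x, (locGEmptyIso G).symm x |>.2⟩
  have hcommon := exists_common_adj_of_compl_degree_le G (fun v => (hreg v).le) (by omega)
  rw [← deltaStarV_iso (locGEmptyIso G), deltaStarV_eq_degree G hcommon,
    degree_eq_of_compl_degree G _ (hreg _)] at hv
  omega

end PseudoPlanar

section Components

variable {V : Type*} {H : SimpleGraph V}

lemma SimpleGraph.CliqueFree.not_adj_of_adj_of_adj (htri : H.CliqueFree 3) {x a b : V}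
    (ha : H.Adj x a) (hb : H.Adj x b) : ¬H.Adj a b :=
  fun hab => htri {x, a, b} (is3Clique_triple_iff.2 ⟨ha, hb, hab⟩)

lemma compl_adj_of_not_reachable {u v p q : V} (huv : ¬H.Reachable u v) (hp : H.Reachable u p)
    (hq : H.Reachable v q) : Hᶜ.Adj p q :=
  (compl_adj H p q).2 ⟨fun h => huv (hp.trans (h ▸ hq.symm)),
    fun h => huv (hp.trans (h.reachable.trans hq.symm))⟩

end Components

section TwoRegular

variable {V : Type*} [Fintype V] {H : SimpleGraph V} [DecidableRel H.Adj]

lemma SimpleGraph.IsRegularOfDegree.exists_neighborFinset_eq_pair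
    (hreg : H.IsRegularOfDegree 2) {x y : V} (hxy : H.Adj x y) :
    ∃ z, z ≠ x ∧ H.neighborFinset y = {x, z} := by
  have hx : x ∈ H.neighborFinset y := (mem_neighborFinset _ _ _).2 hxy.symm
  obtain ⟨a, b, hab, hy⟩ := card_eq_two.1 (hreg y)
  rw [hy, mem_insert, mem_singleton] at hx
  obtain rfl | rfl := hx
  · exact ⟨b, Ne.symm hab, hy⟩
  · exact ⟨a, hab, hy.trans (pair_comm _ _)⟩

lemma exists_path_three (hreg : H.IsRegularOfDegree 2) (htri : H.CliqueFree 3) (x : V) :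
    ∃ a b c, a ≠ b ∧ c ≠ x ∧ c ≠ b ∧
      H.neighborFinset x = {a, b} ∧ H.neighborFinset a = {x, c} ∧
      ({x, a, b, c} : Finset V) ⊆ univ.filter (H.Reachable x) ∧
      ({x, a, b, c} : Finset V).card = 4 := by
  obtain ⟨a, b, hab, hx⟩ := card_eq_two.1 (hreg x)
  have hxa : H.Adj x a := (mem_neighborFinset _ _ _).1 (by simp [hx])
  have hxb : H.Adj x b := (mem_neighborFinset _ _ _).1 (by simp [hx])
  obtain ⟨c, hcx, ha⟩ := hreg.exists_neighborFinset_eq_pair hxa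
  have hac : H.Adj a c := (mem_neighborFinset _ _ _).1 (by simp [ha])
  have hcb : c ≠ b := by
    rintro rfl
    exact htri.not_adj_of_adj_of_adj hxa hxb hac
  refine ⟨a, b, c, hab, hcx, hcb, hx, ha, ?_, ?_⟩
  · intro z hz
    simp only [mem_insert, mem_singleton] at hz
    rw [mem_filter]
    obtain rfl | rfl | rfl | rfl := hz
    exacts [⟨mem_univ _, Reachable.refl _⟩, ⟨mem_univ _, hxa.reachable⟩,
      ⟨mem_univ _, hxb.reachable⟩, ⟨mem_univ _, hxa.reachable.trans hac.reachable⟩]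
  · rw [card_insert_of_notMem, card_insert_of_notMem, card_pair hcb.symm]
    · simp [hab, hac.ne]
    · simp [hxa.ne, hxb.ne, hcx.symm]

lemma four_le_card_reachable (hreg : H.IsRegularOfDegree 2) (htri : H.CliqueFree 3) (x : V) :
    4 ≤ (univ.filter (H.Reachable x)).card := by
  obtain ⟨a, b, c, -, -, -, -, -, hsub, hcard⟩ := exists_path_three hreg htri x
  exact hcard ▸ card_le_card hsub

lemma exists_square (hreg : H.IsRegularOfDegree 2) (htri : H.CliqueFree 3) {u : V}
    (hsmall : (univ.filter (H.Reachable u)).card ≤ 4) :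
    ∃ x : Fin 4 → V, Function.Injective x ∧ (∀ i, H.Reachable u (x i)) ∧
      ∀ i j, Hᶜ.Adj (x i) (x j) ↔ twoK2.Adj i j := by
  obtain ⟨a, b, c, hab, hcu, hcb, hu, ha, hsub, hcard⟩ := exists_path_three hreg htri u
  have hK : univ.filter (H.Reachable u) = {u, a, b, c} :=
    (eq_of_subset_of_card_le hsub (hcard ▸ hsmall)).symm
  have hua : H.Adj u a := (mem_neighborFinset _ _ _).1 (by simp [hu])
  have hub : H.Adj u b := (mem_neighborFinset _ _ _).1 (by simp [hu])
  obtain ⟨d, hdu, hb⟩ := hreg.exists_neighborFinset_eq_pair hub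
  have hbd : H.Adj b d := (mem_neighborFinset _ _ _).1 (by simp [hb])
  have hdK : d ∈ ({u, a, b, c} : Finset V) :=
    hK ▸ mem_filter.2 ⟨mem_univ _, hub.reachable.trans hbd.reachable⟩
  have hda : d ≠ a := by
    rintro rfl
    exact htri.not_adj_of_adj_of_adj hua hub hbd.symm
  obtain rfl : c = d := by simpa [hdu, hda, hbd.ne.symm, eq_comm] using hdK
  have hac : H.Adj a c := (mem_neighborFinset _ _ _).1 (by simp [ha])
  have hc : H.neighborFinset c = {a, b} := by
    refine (eq_of_subset_of_card_le (fun z hz => ?_)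
      (by rw [card_neighborFinset_eq_degree, hreg c, card_pair hab])).symm
    rw [mem_insert, mem_singleton] at hz
    obtain rfl | rfl := hz
    exacts [(mem_neighborFinset _ _ _).2 hac.symm, (mem_neighborFinset _ _ _).2 hbd.symm]
  -- the component is the 4-cycle `u a c b`, whose complement has the two edges `ab` and `uc`
  refine ⟨![a, b, u, c], ?_, ?_, ?_⟩
  · intro i j h
    fin_cases i <;> fin_cases j <;>
      simp [hab, hua.ne, hub.ne, hac.ne, hbd.ne, hcu, hab.symm, hua.ne.symm, hub.ne.symm,
        hac.ne.symm, hbd.ne.symm, hcu.symm] at h ⊢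
  · intro i
    fin_cases i
    exacts [hua.reachable, hub.reachable, Reachable.refl _, hua.reachable.trans hac.reachable]
  · intro i j
    fin_cases i <;> fin_cases j <;>
      simp [compl_adj, twoK2_adj_iff, ← mem_neighborFinset H, hu, ha, hb, hc, hab, hab.symm,
        hua.ne, hub.ne, hac.ne, hbd.ne, hcu, hua.ne.symm, hub.ne.symm, hac.ne.symm,
        hbd.ne.symm, hcu.symm]

lemma nonempty_compl_iso_joinG_twoK2 (hreg : H.IsRegularOfDegree 2) (htri : H.CliqueFree 3)
    (hcard : Fintype.card V ≤ 8) {u v : V} (huv : ¬H.Reachable u v) :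
    Nonempty (Hᶜ ≃g joinG twoK2 twoK2) := by
  have hdisj : Disjoint (univ.filter (H.Reachable u)) (univ.filter (H.Reachable v)) :=
    disjoint_left.2 fun z hu hv => huv ((mem_filter.1 hu).2.trans (mem_filter.1 hv).2.symm)
  have hsum := (card_union_of_disjoint hdisj).symm.trans_le (card_le_univ _)
  have hu := four_le_card_reachable hreg htri u
  have hv := four_le_card_reachable hreg htri v
  obtain ⟨x, hx, hxu, hxA⟩ := exists_square hreg htri (u := u) (by omega)
  obtain ⟨y, hy, hyv, hyB⟩ := exists_square hreg htri (u := v) (by omega)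
  exact nonempty_iso_joinG hx hy hxA hyB
    (fun i j => compl_adj_of_not_reachable huv (hxu i) (hyv j)) (by simpa using hcard)

end TwoRegular

theorem stmt_17 {V : Type*} [Fintype V] (G : SimpleGraph V)
    (hpp : PseudoPlanar G) (hα : indNum G = 2) (heu : Eulerian (indepC G)) :
    ComplexConnected (indepC G) := by
  have hreg : Gᶜ.IsRegularOfDegree 2 := compl_degree_eq_two G hα heu
  have htri := cliqueFree_three_compl G hα.le
  obtain ⟨F, -, hF⟩ := exists_mem_indepC_card_eq_indNum G
  obtain ⟨x, -⟩ := card_pos.1 (by omega : 0 < F.card)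
  rw [ComplexConnected, fromRel_indepC_eq_compl]
  refine @Connected.mk _ _ (fun u v => ?_) ⟨x⟩
  by_contra huv
  obtain ⟨e⟩ := nonempty_compl_iso_joinG_twoK2 hreg htri (hpp.card_le_eight hreg) huv
  rw [compl_compl] at e
  exact hpp.isEmpty_iso_joinG.false e
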